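/- arXiv:2301.13323 — 4 statements merged into one kernel-verified Lean document; each statement's English description precedes it below -/
import Mathlib

section
/- Let P and Q be probability measures and f measurable with 0 ≤ f ≤ C. Then |E_Q[f] - E_P[f]| ≤ √2 · C · d_JS(P, Q), where d_JS(P,Q) = √(D_JS(P‖Q)) is the Jensen–Shannon distance. -/
open MeasureTheory ProbabilityTheory Real
open scoped ENNReal

/-!
Let `M = (P + Q) / 2`, `p = dP/dM` and `q = dQ/dM`, so that `p + q = 2` and
`t = (p - q) / 2 ∈ [-1, 1]`. Since `f - C/2` is bounded by `C/2`,
`|E_Q f - E_P f| ≤ C ∫ |t| dM ≤ C (∫ t² dM)^(1/2)`. The elementary inequality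
`t² ≤ (1 + t) log (1 + t) + (1 - t) log (1 - t)`, integrated against `M`, gives
`∫ t² dM ≤ D_KL(P‖M) + D_KL(Q‖M) = 2 D_JS(P‖Q)`.
-/

/-- Kullback–Leibler divergence (natural log), as a real number. -/
noncomputable def klDiv {α : Type*} [MeasurableSpace α] (P Q : Measure α) : ℝ :=
  ∫ x, Real.log ((P.rnDeriv Q) x).toReal ∂P

noncomputable def midM {α : Type*} [MeasurableSpace α] (P Q : Measure α) : Measure α :=
  (2⁻¹ : ℝ≥0∞) • (P + Q)

noncomputable def jsDiv {α : Type*} [MeasurableSpace α] (P Q : Measure α) : ℝ :=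
  2⁻¹ * klDiv P (midM P Q) + 2⁻¹ * klDiv Q (midM P Q)

noncomputable def jsDist {α : Type*} [MeasurableSpace α] (P Q : Measure α) : ℝ :=
  Real.sqrt (jsDiv P Q)

lemma two_mul_le_log_one_add_sub_log_one_sub {t : ℝ} (h0 : 0 ≤ t) (h1 : t < 1) :
    2 * t ≤ log (1 + t) - log (1 - t) := by
  have hsum := hasSum_log_sub_log_of_abs_lt_one (abs_lt.mpr ⟨by linarith, h1⟩)
  simpa using sum_le_hasSum {0} (fun k _ => by positivity) hsum

lemma hasDerivAt_mul_log_one_add_add_mul_log_one_sub {t : ℝ} (h0 : -1 < t) (h1 : t < 1) :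
    HasDerivAt (fun t => (1 + t) * log (1 + t) + (1 - t) * log (1 - t))
      (log (1 + t) - log (1 - t)) t := by
  have hplus := (hasDerivAt_mul_log (x := 1 + t) (by linarith)).comp t
    ((hasDerivAt_id t).const_add 1)
  have hminus := (hasDerivAt_mul_log (x := 1 - t) (by linarith)).comp t
    ((hasDerivAt_id t).const_sub 1)
  exact (hplus.add hminus).congr_deriv (by ring)

lemma sq_le_mul_log_one_add_add_mul_log_one_sub {t : ℝ} (h0 : 0 ≤ t) (h1 : t ≤ 1) :
    t ^ 2 ≤ (1 + t) * log (1 + t) + (1 - t) * log (1 - t) := by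
  set F : ℝ → ℝ := fun t => (1 + t) * log (1 + t) + (1 - t) * log (1 - t) - t ^ 2
  have hF : ∀ t ∈ Set.Ioo (0 : ℝ) 1, HasDerivAt F (log (1 + t) - log (1 - t) - 2 * t) t :=
    fun t ht => (hasDerivAt_mul_log_one_add_add_mul_log_one_sub (by linarith [ht.1]) ht.2).sub
      (by simpa using hasDerivAt_pow 2 t)
  have hmono : MonotoneOn F (Set.Icc 0 1) := by
    refine monotoneOn_of_deriv_nonneg (convex_Icc 0 1) ?_ ?_ ?_
    · exact (((continuous_mul_log.comp (continuous_const.add continuous_id)).add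
        (continuous_mul_log.comp (continuous_const.sub continuous_id))).sub
        (continuous_pow 2)).continuousOn
    · rw [interior_Icc]
      exact fun t ht => (hF t ht).differentiableAt.differentiableWithinAt
    · rw [interior_Icc]
      intro t ht
      rw [(hF t ht).deriv, sub_nonneg]
      exact two_mul_le_log_one_add_sub_log_one_sub ht.1.le ht.2
  have := hmono ⟨le_rfl, zero_le_one⟩ ⟨h0, h1⟩ h0
  simp only [F] at this
  norm_num at this
  linarith

lemma sq_sub_div_two_le_mul_log_add_mul_log {a b : ℝ} (ha : 0 ≤ a) (hb : 0 ≤ b)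
    (hab : a + b = 2) :
    ((a - b) / 2) ^ 2 ≤ a * log a + b * log b := by
  rcases le_total b a with h | h
  · have := sq_le_mul_log_one_add_add_mul_log_one_sub (t := (a - b) / 2) (by linarith) (by linarith)
    rwa [show 1 + (a - b) / 2 = a by linarith, show 1 - (a - b) / 2 = b by linarith] at this
  · have := sq_le_mul_log_one_add_add_mul_log_one_sub (t := (b - a) / 2) (by linarith) (by linarith)
    rw [show 1 + (b - a) / 2 = b by linarith, show 1 - (b - a) / 2 = a by linarith] at this
    linarith [show ((a - b) / 2) ^ 2 = ((b - a) / 2) ^ 2 by ring]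

section midM

variable {α : Type*} [MeasurableSpace α] (P Q : Measure α)

lemma absolutelyContinuous_midM_left : P ≪ midM P Q :=
  (Measure.AbsolutelyContinuous.rfl.add_right Q).trans
    (Measure.absolutelyContinuous_smul (by norm_num))

lemma absolutelyContinuous_midM_right : Q ≪ midM P Q :=
  (Measure.AbsolutelyContinuous.rfl.add_right' P).trans
    (Measure.absolutelyContinuous_smul (by norm_num))

lemma two_smul_midM : (2 : ℝ≥0∞) • midM P Q = P + Q := by
  rw [midM, smul_smul, ENNReal.mul_inv_cancel two_ne_zero ENNReal.ofNat_ne_top, one_smul]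

instance [IsFiniteMeasure P] [IsFiniteMeasure Q] : IsFiniteMeasure (midM P Q) :=
  (P + Q).smul_finite (by norm_num)

instance [IsProbabilityMeasure P] [IsProbabilityMeasure Q] : IsProbabilityMeasure (midM P Q) :=
  ⟨by simp [midM, ENNReal.inv_two_add_inv_two]⟩

lemma toReal_rnDeriv_add_toReal_rnDeriv_midM [IsFiniteMeasure P] [IsFiniteMeasure Q] :
    ∀ᵐ x ∂midM P Q, (P.rnDeriv (midM P Q) x).toReal + (Q.rnDeriv (midM P Q) x).toReal = 2 := by
  set M := midM P Q
  have hadd := Measure.rnDeriv_add P Q M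
  rw [← two_smul_midM] at hadd
  filter_upwards [hadd, Measure.rnDeriv_smul_left_of_ne_top M M ENNReal.ofNat_ne_top (r := 2),
    Measure.rnDeriv_self M, Measure.rnDeriv_lt_top P M, Measure.rnDeriv_lt_top Q M]
    with x hsum hsmul hself hP hQ
  rw [← ENNReal.toReal_add hP.ne hQ.ne, ← Pi.add_apply, ← hsum, hsmul]
  simp [hself]

end midM

section

variable {α : Type*} [MeasurableSpace α]

lemma klDiv_eq_integral_mul_log {P M : Measure α} [SigmaFinite P] [SigmaFinite M] (h : P ≪ M) :
    klDiv P M = ∫ x, (P.rnDeriv M x).toReal * log (P.rnDeriv M x).toReal ∂M :=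
  (integral_rnDeriv_smul h).symm

lemma integrable_mul_log_of_ae_mem_Icc {μ : Measure α} [IsFiniteMeasure μ] {g : α → ℝ}
    (hg : Measurable g) {a b : ℝ} (hgab : ∀ᵐ x ∂μ, g x ∈ Set.Icc a b) :
    Integrable (fun x => g x * log (g x)) μ := by
  obtain ⟨K, hK⟩ := isCompact_Icc.exists_bound_of_continuousOn continuous_mul_log.continuousOn
  exact .of_bound (hg.mul hg.log).aestronglyMeasurable K
    (by filter_upwards [hgab] with x hx using hK _ hx)

lemma integral_sq_sub_div_two_toReal_rnDeriv_midM_le (P Q : Measure α)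
    [IsFiniteMeasure P] [IsFiniteMeasure Q] :
    ∫ x, (((P.rnDeriv (midM P Q) x).toReal - (Q.rnDeriv (midM P Q) x).toReal) / 2) ^ 2 ∂midM P Q
      ≤ 2 * jsDiv P Q := by
  set M := midM P Q
  set p := fun x => (P.rnDeriv M x).toReal
  set q := fun x => (Q.rnDeriv M x).toReal
  have hsum := toReal_rnDeriv_add_toReal_rnDeriv_midM P Q
  have hp : ∀ᵐ x ∂M, p x ∈ Set.Icc 0 2 := by
    filter_upwards [hsum] with x hx
    exact ⟨ENNReal.toReal_nonneg, by linarith [(ENNReal.toReal_nonneg : 0 ≤ q x)]⟩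
  have hq : ∀ᵐ x ∂M, q x ∈ Set.Icc 0 2 := by
    filter_upwards [hsum] with x hx
    exact ⟨ENNReal.toReal_nonneg, by linarith [(ENNReal.toReal_nonneg : 0 ≤ p x)]⟩
  have hpi := integrable_mul_log_of_ae_mem_Icc (Measure.measurable_rnDeriv P M).ennreal_toReal hp
  have hqi := integrable_mul_log_of_ae_mem_Icc (Measure.measurable_rnDeriv Q M).ennreal_toReal hq
  calc ∫ x, ((p x - q x) / 2) ^ 2 ∂M ≤ ∫ x, (p x * log (p x) + q x * log (q x)) ∂M := by
        refine integral_mono_of_nonneg (.of_forall fun x => sq_nonneg _) (hpi.add hqi) ?_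
        filter_upwards [hsum, hp, hq] with x hx hpx hqx
        exact sq_sub_div_two_le_mul_log_add_mul_log hpx.1 hqx.1 hx
    _ = 2 * jsDiv P Q := by
        rw [integral_add hpi hqi, jsDiv,
          klDiv_eq_integral_mul_log (absolutelyContinuous_midM_left P Q),
          klDiv_eq_integral_mul_log (absolutelyContinuous_midM_right P Q)]
        ring

lemma abs_integral_sub_integral_le_mul_integral_abs_toReal_rnDeriv_sub {P Q M : Measure α}
    [IsFiniteMeasure P] [IsFiniteMeasure Q] [SigmaFinite M] (hP : P ≪ M) (hQ : Q ≪ M)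
    {g : α → ℝ} (hgP : Integrable g P) (hgQ : Integrable g Q) {K : ℝ}
    (hgK : ∀ᵐ x ∂M, |g x| ≤ K) :
    |∫ x, g x ∂P - ∫ x, g x ∂Q|
      ≤ K * ∫ x, |(P.rnDeriv M x).toReal - (Q.rnDeriv M x).toReal| ∂M := by
  rw [← integral_rnDeriv_smul hP, ← integral_rnDeriv_smul hQ,
    ← integral_sub ((integrable_rnDeriv_smul_iff hP).2 hgP)
      ((integrable_rnDeriv_smul_iff hQ).2 hgQ),
    ← integral_const_mul]
  refine norm_integral_le_of_norm_le (G := ℝ) (((Measure.integrable_toReal_rnDeriv (μ := P)).sub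
    (Measure.integrable_toReal_rnDeriv (μ := Q))).abs.const_mul K) ?_
  filter_upwards [hgK] with x hx
  rw [smul_eq_mul, smul_eq_mul, ← sub_mul, Real.norm_eq_abs, abs_mul, mul_comm]
  exact mul_le_mul_of_nonneg_right hx (abs_nonneg _)

lemma integral_abs_le_sqrt_integral_sq {μ : Measure α} [IsProbabilityMeasure μ] {g : α → ℝ}
    (hg : MemLp g 2 μ) : ∫ x, |g x| ∂μ ≤ √(∫ x, g x ^ 2 ∂μ) := by
  have hjensen := (even_two.convexOn_pow (𝕜 := ℝ)).map_integral_le (continuous_pow 2).continuousOn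
    isClosed_univ (.of_forall fun _ => trivial) (hg.integrable one_le_two).abs
    (by simpa [Function.comp_def] using hg.integrable_sq)
  simp only [sq_abs] at hjensen
  exact (le_abs_self _).trans (abs_le_sqrt hjensen)

end

theorem stmt2_general {α : Type*} [MeasurableSpace α] (P Q : Measure α)
    [IsProbabilityMeasure P] [IsProbabilityMeasure Q]
    (f : α → ℝ) (C : ℝ) (hf : Measurable f)
    (hf0 : ∀ x, 0 ≤ f x) (hfC : ∀ x, f x ≤ C) :
    |∫ x, f x ∂Q - ∫ x, f x ∂P| ≤ Real.sqrt 2 * C * jsDist P Q := by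
  obtain ⟨x₀⟩ := nonempty_of_isProbabilityMeasure P
  have hC : 0 ≤ C := (hf0 x₀).trans (hfC x₀)
  set M := midM P Q
  set p := fun x => (P.rnDeriv M x).toReal
  set q := fun x => (Q.rnDeriv M x).toReal
  have hcentred : ∀ x, |f x - C / 2| ≤ C / 2 := fun x =>
    abs_le.2 ⟨by linarith [hf0 x], by linarith [hfC x]⟩
  have hint : ∀ (μ : Measure α) [IsFiniteMeasure μ], Integrable f μ := fun μ _ =>
    .of_bound hf.aestronglyMeasurable C
      (.of_forall fun x => (abs_of_nonneg (hf0 x)).trans_le (hfC x))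
  have hdiff : MemLp (fun x => (p x - q x) / 2) 2 M := by
    refine .of_bound (((Measure.measurable_rnDeriv P M).ennreal_toReal.sub
      (Measure.measurable_rnDeriv Q M).ennreal_toReal).div_const 2).aestronglyMeasurable 1 ?_
    filter_upwards [toReal_rnDeriv_add_toReal_rnDeriv_midM P Q] with x hx
    have hp : 0 ≤ p x := ENNReal.toReal_nonneg
    have hq : 0 ≤ q x := ENNReal.toReal_nonneg
    rw [Real.norm_eq_abs, abs_le]
    constructor <;> linarith
  calc |∫ x, f x ∂Q - ∫ x, f x ∂P| = |∫ x, f x - C / 2 ∂P - ∫ x, f x - C / 2 ∂Q| := by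
        simp [integral_sub (hint _) (integrable_const _), abs_sub_comm]
    _ ≤ C / 2 * ∫ x, |p x - q x| ∂M :=
        abs_integral_sub_integral_le_mul_integral_abs_toReal_rnDeriv_sub
          (absolutelyContinuous_midM_left P Q) (absolutelyContinuous_midM_right P Q)
          ((hint P).sub (integrable_const _)) ((hint Q).sub (integrable_const _))
          (.of_forall hcentred)
    _ = C * ∫ x, |(p x - q x) / 2| ∂M := by
        simp only [abs_div, abs_two, integral_div]
        ring
    _ ≤ C * √(∫ x, ((p x - q x) / 2) ^ 2 ∂M) := by
        gcongr
        exact integral_abs_le_sqrt_integral_sq hdiff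
    _ ≤ C * √(2 * jsDiv P Q) := by
        gcongr
        exact integral_sq_sub_div_two_toReal_rnDeriv_midM_le P Q
    _ = Real.sqrt 2 * C * jsDist P Q := by
        rw [jsDist, sqrt_mul zero_le_two]
        ring

/-- |E_Q[f] - E_P[f]| ≤ √2 · C · d_JS(P, Q) for 0 ≤ f ≤ C. -/
theorem stmt2 {α : Type*} [MeasurableSpace α] (P Q : Measure α)
    [IsProbabilityMeasure P] [IsProbabilityMeasure Q]
    (f : α → ℝ) (C : ℝ) (hC : 0 < C) (hf : Measurable f)
    (hf0 : ∀ x, 0 ≤ f x) (hfC : ∀ x, f x ≤ C) :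
    |∫ x, f x ∂Q - ∫ x, f x ∂P| ≤ Real.sqrt 2 * C * jsDist P Q :=
  stmt2_general P Q f C hf hf0 hfC
end

section
/- If g : X → Z is a measurable map and P_i^Z, P_j^Z are the pushforwards of probability measures P_i^X, P_j^X under g, then d_JS(P_i^X, P_j^X) ≥ d_JS(P_i^Z, P_j^Z). (Data processing inequality for Jensen–Shannon distance.) -/
open MeasureTheory ProbabilityTheory Real
open scoped ENNReal

/-!
The Jensen–Shannon divergence is the average of the Kullback–Leibler divergences of `P` and `Q`
from their midpoint `M = (P + Q)/2`, and pushing forward commutes with taking the midpoint. So the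
claim follows from the data processing inequality for the Kullback–Leibler divergence,
`InformationTheory.klDiv_map_le`. The only work is to identify the real-valued `klDiv` used here
with the `toReal` of Mathlib's `ℝ≥0∞`-valued divergence, which is legitimate because the
divergence from the midpoint is finite: `dP/dM ≤ 2`, and `klFun x = x log x + 1 - x ≤ 1` on
`[0, e]`.
-/

namespace MeasureTheory.Measure

variable {α : Type*} [MeasurableSpace α]

lemma rnDeriv_le_of_le_smul {μ ν : Measure α} [SigmaFinite ν] {c : ℝ≥0∞} (h : μ ≤ c • ν) :
    μ.rnDeriv ν ≤ᵐ[ν] fun _ ↦ c := by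
  refine ae_le_of_forall_setLIntegral_le_of_sigmaFinite (μ.measurable_rnDeriv ν)
    fun s _ _ ↦ ?_
  calc ∫⁻ x in s, μ.rnDeriv ν x ∂ν ≤ μ s := setLIntegral_rnDeriv_le s
    _ ≤ c * ν s := h s
    _ = ∫⁻ _ in s, c ∂ν := by simp

end MeasureTheory.Measure

namespace InformationTheory

lemma klFun_le_one {x : ℝ} (hx₀ : 0 ≤ x) (hx : x ≤ exp 1) : klFun x ≤ 1 := by
  have hlog : log x ≤ 1 := by
    rcases hx₀.eq_or_lt with rfl | hpos
    · simp
    · exact (log_le_iff_le_exp hpos).mpr hx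
  have : x * log x ≤ x := mul_le_of_le_one_right hx₀ hlog
  rw [klFun_apply]
  linarith

lemma klDiv_ne_top_of_le_two_smul {α : Type*} [MeasurableSpace α] {μ ν : Measure α}
    [IsFiniteMeasure μ] [IsFiniteMeasure ν] (h : μ ≤ (2 : ℝ≥0∞) • ν) : klDiv μ ν ≠ ∞ := by
  have h_le_one : ∀ᵐ x ∂ν, ENNReal.ofReal (klFun (μ.rnDeriv ν x).toReal) ≤ 1 := by
    filter_upwards [Measure.rnDeriv_le_of_le_smul h] with x hx
    refine ENNReal.ofReal_le_one.mpr (klFun_le_one ENNReal.toReal_nonneg ?_)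
    calc (μ.rnDeriv ν x).toReal ≤ 2 := ENNReal.toReal_le_of_le_ofReal zero_le_two (by simpa)
      _ ≤ exp 1 := by linarith [add_one_le_exp (1 : ℝ)]
  rw [klDiv_eq_lintegral_klFun_of_ac (Measure.absolutelyContinuous_of_le_smul h)]
  refine ne_top_of_le_ne_top (measure_ne_top ν Set.univ) ?_
  simpa using lintegral_mono_ae h_le_one

end InformationTheory

section

variable {α β : Type*} [MeasurableSpace α] [MeasurableSpace β]

lemma klDiv_eq_toReal_klDiv {P Q : Measure α} [IsFiniteMeasure P] [IsFiniteMeasure Q]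
    (hPQ : P ≪ Q) (h_univ : P Set.univ = Q Set.univ) :
    klDiv P Q = (InformationTheory.klDiv P Q).toReal :=
  (InformationTheory.toReal_klDiv_of_measure_eq hPQ h_univ).symm

lemma klDiv_map_le {P Q : Measure α} [IsFiniteMeasure P] [IsFiniteMeasure Q]
    (hPQ : P ≪ Q) (h_univ : P Set.univ = Q Set.univ) (h_fin : InformationTheory.klDiv P Q ≠ ∞)
    {g : α → β} (hg : Measurable g) :
    klDiv (P.map g) (Q.map g) ≤ klDiv P Q := by
  have h_univ_map : P.map g Set.univ = Q.map g Set.univ := by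
    simp only [Measure.map_apply hg MeasurableSet.univ, Set.preimage_univ, h_univ]
  rw [klDiv_eq_toReal_klDiv (hPQ.map hg) h_univ_map, klDiv_eq_toReal_klDiv hPQ h_univ]
  exact ENNReal.toReal_mono h_fin (InformationTheory.klDiv_map_le P Q hg)

lemma midM_comm (P Q : Measure α) : midM P Q = midM Q P := by
  rw [midM, midM, add_comm]

lemma map_midM (P Q : Measure α) {g : α → β} (hg : Measurable g) :
    (midM P Q).map g = midM (P.map g) (Q.map g) := by
  rw [midM, midM, Measure.map_smul, Measure.map_add _ _ hg]

instance (P Q : Measure α) [IsProbabilityMeasure P] [IsProbabilityMeasure Q] :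
    IsProbabilityMeasure (midM P Q) :=
  ⟨by simp [midM, ENNReal.inv_two_add_inv_two]⟩

lemma le_two_smul_midM (P Q : Measure α) : P ≤ (2 : ℝ≥0∞) • midM P Q := by
  rw [midM, smul_smul, ENNReal.mul_inv_cancel two_ne_zero ENNReal.ofNat_ne_top, one_smul]
  exact Measure.le_add_right le_rfl

lemma klDiv_map_midM_le (P Q : Measure α) [IsProbabilityMeasure P] [IsProbabilityMeasure Q]
    {g : α → β} (hg : Measurable g) :
    klDiv (P.map g) (midM (P.map g) (Q.map g)) ≤ klDiv P (midM P Q) := by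
  rw [← map_midM P Q hg]
  exact klDiv_map_le (Measure.absolutelyContinuous_of_le_smul (le_two_smul_midM P Q))
    (by simp) (InformationTheory.klDiv_ne_top_of_le_two_smul (le_two_smul_midM P Q)) hg

lemma jsDiv_map_le (P Q : Measure α) [IsProbabilityMeasure P] [IsProbabilityMeasure Q]
    {g : α → β} (hg : Measurable g) :
    jsDiv (P.map g) (Q.map g) ≤ jsDiv P Q := by
  have hP := klDiv_map_midM_le P Q hg
  have hQ := klDiv_map_midM_le Q P hg
  rw [midM_comm Q, midM_comm (Q.map g)] at hQ
  rw [jsDiv, jsDiv]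
  linarith

end

/-- data-processing inequality for the Jensen–Shannon distance:
d_JS(P_i^X, P_j^X) ≥ d_JS(P_i^Z, P_j^Z) for pushforwards under a measurable g. -/
theorem stmt5 {X Z : Type*} [MeasurableSpace X] [MeasurableSpace Z]
    (Pi Pj : Measure X) [IsProbabilityMeasure Pi] [IsProbabilityMeasure Pj]
    (g : X → Z) (hg : Measurable g) :
    jsDist (Pi.map g) (Pj.map g) ≤ jsDist Pi Pj :=
  sqrt_le_sqrt (jsDiv_map_le Pi Pj hg)
end

section
/- Let N source domains D_1,…,D_N and a target domain D^T be given, with bounded loss L ≤ C. Then ε_{D^T}(f) ≤ (1/N)∑_i ε_{D_i}(f) + √2·C·min_i d_JS(P_{D^T}^{X,Y}, P_{D_i}^{X,Y}) + √2·C·max_{i,j} d_JS(P_{D_i}^{X,Y}, P_{D_j}^{X,Y}). -/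
/-!
Let `M = (P + Q) / 2`. Both `P` and `Q` have densities `ρ ≤ 2` with respect to `M`, so for a
function `g` with values in `[0, C]`, `|E_P g - E_M g| ≤ (C / 2) ∫ |ρ - 1| dM`. The pointwise
inequality `3 (x - 1)² / (x + 2) ≤ 2 (x log x - x + 1)`, combined with AM-GM
`2 |x - 1| ≤ l (x - 1)² / (x + 2) + (x + 2) / l` for an optimised `l`, gives the Pinsker-type
bound `(∫ |ρ - 1| dM)² ≤ 2 KL(P ‖ M)`. Adding the estimates for `P` and `Q` yields
`ε_P ≤ ε_Q + √2 C d_JS(P, Q)`. The theorem follows by transferring from the target to the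
source domain closest to it, then from that source to each source domain, and averaging.
-/

open MeasureTheory ProbabilityTheory Real
open scoped ENNReal

open Set
open InformationTheory (klFun)

lemma isMinOn_of_hasDerivAt_of_sub_mul_nonneg {D : Set ℝ} (hD : Convex ℝ D) {f f' : ℝ → ℝ}
    {a : ℝ} (ha : a ∈ D) (hf : ContinuousOn f D)
    (hf' : ∀ x ∈ interior D, HasDerivAt f (f' x) x)
    (hsign : ∀ x ∈ interior D, 0 ≤ (x - a) * f' x) : IsMinOn f D a := by
  intro x hx
  rcases le_total a x with hax | hxa
  · refine monotoneOn_of_hasDerivWithinAt_nonneg (hD.inter (convex_Ici a))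
      (hf.mono inter_subset_left) (fun y hy => (hf' y ?_).hasDerivWithinAt) (fun y hy => ?_)
      ⟨ha, mem_Ici.2 le_rfl⟩ ⟨hx, hax⟩ hax
    · exact interior_mono inter_subset_left hy
    · rw [interior_inter, interior_Ici] at hy
      exact nonneg_of_mul_nonneg_right (hsign y hy.1) (sub_pos.2 hy.2)
  · refine antitoneOn_of_hasDerivWithinAt_nonpos (hD.inter (convex_Iic a))
      (hf.mono inter_subset_left) (fun y hy => (hf' y ?_).hasDerivWithinAt) (fun y hy => ?_)
      ⟨hx, hxa⟩ ⟨ha, mem_Iic.2 le_rfl⟩ hxa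
    · exact interior_mono inter_subset_left hy
    · rw [interior_inter, interior_Iic] at hy
      exact nonpos_of_mul_nonneg_right (hsign y hy.1) (sub_neg.2 hy.2)

lemma hasDerivAt_log_sub_two_mul_sub_one_div {x : ℝ} (hx : 0 < x) :
    HasDerivAt (fun x => log x - 2 * (x - 1) / (x + 1)) (x⁻¹ - 4 / (x + 1) ^ 2) x := by
  have hquot := (((hasDerivAt_id x).sub_const 1).const_mul 2).div
    ((hasDerivAt_id x).add_const 1) (by positivity : x + 1 ≠ 0)
  refine ((hasDerivAt_log hx.ne').sub hquot).congr_deriv ?_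
  simp only [id]
  ring

lemma sub_one_mul_log_sub_two_mul_sub_one_div_nonneg {x : ℝ} (hx : 0 < x) :
    0 ≤ (x - 1) * (log x - 2 * (x - 1) / (x + 1)) := by
  have hmono : MonotoneOn (fun x => log x - 2 * (x - 1) / (x + 1)) (Ioi 0) := by
    refine monotoneOn_of_hasDerivWithinAt_nonneg (convex_Ioi 0)
      (f' := fun x => x⁻¹ - 4 / (x + 1) ^ 2)
      (fun y hy => (hasDerivAt_log_sub_two_mul_sub_one_div hy).continuousAt.continuousWithinAt)
      (fun y hy => ?_) (fun y hy => ?_)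
    all_goals rw [interior_Ioi] at hy
    · exact (hasDerivAt_log_sub_two_mul_sub_one_div hy).hasDerivWithinAt
    · have hy' : (0 : ℝ) < y := hy
      rw [sub_nonneg, div_le_iff₀ (by positivity), ← div_eq_inv_mul, le_div_iff₀ hy']
      nlinarith [sq_nonneg (y - 1)]
  have hone : log 1 - 2 * (1 - 1) / (1 + 1) = 0 := by norm_num
  rcases le_total 1 x with h1 | h1
  · exact mul_nonneg (by linarith) (hone ▸ hmono (mem_Ioi.2 one_pos) hx h1)
  · exact mul_nonneg_of_nonpos_of_nonpos (by linarith) (hone ▸ hmono hx (mem_Ioi.2 one_pos) h1)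

lemma hasDerivAt_two_mul_klFun_sub_three_mul_sq_div {x : ℝ} (hx : 0 < x) :
    HasDerivAt (fun x => 2 * klFun x - 3 * ((x - 1) ^ 2 / (x + 2)))
      (2 * log x - 3 * (x - 1) * (x + 5) / (x + 2) ^ 2) x := by
  have hquot := (((hasDerivAt_id x).sub_const 1).pow 2).div ((hasDerivAt_id x).add_const 2)
    (by positivity : x + 2 ≠ 0)
  refine (((InformationTheory.hasDerivAt_klFun hx.ne').const_mul 2).sub
    (hquot.const_mul 3)).congr_deriv ?_
  simp only [id, Pi.pow_apply]
  field_simp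
  ring

lemma three_mul_sq_div_le_two_mul_klFun {x : ℝ} (hx : 0 ≤ x) :
    3 * ((x - 1) ^ 2 / (x + 2)) ≤ 2 * klFun x := by
  have hmin : IsMinOn (fun x => 2 * klFun x - 3 * ((x - 1) ^ 2 / (x + 2)))
      (Ici 0) 1 := by
    refine isMinOn_of_hasDerivAt_of_sub_mul_nonneg (convex_Ici 0) (mem_Ici.2 zero_le_one)
      (f' := fun x => 2 * log x - 3 * (x - 1) * (x + 5) / (x + 2) ^ 2)
      ?_ (fun y hy => ?_) (fun y hy => ?_)
    · exact (continuous_const.mul InformationTheory.continuous_klFun).continuousOn.sub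
        (continuousOn_const.mul (ContinuousOn.div (by fun_prop) (by fun_prop)
          fun t ht => by linarith [mem_Ici.1 ht]))
    all_goals rw [interior_Ici] at hy
    · exact hasDerivAt_two_mul_klFun_sub_three_mul_sq_div hy
    · have hy' : (0 : ℝ) < y := hy
      have hlog := sub_one_mul_log_sub_two_mul_sub_one_div_nonneg hy'
      calc (0 : ℝ) ≤ 2 * ((y - 1) * (log y - 2 * (y - 1) / (y + 1)))
            + (y - 1) ^ 4 / ((y + 1) * (y + 2) ^ 2) := by positivity
        _ = _ := by field_simp; ring
  have h := hmin (mem_Ici.2 hx)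
  simp only [InformationTheory.klFun_one] at h
  norm_num at h
  linarith

lemma two_mul_abs_le_mul_sq_div_add_div {a b l : ℝ} (hb : 0 < b) (hl : 0 < l) :
    2 * |a| ≤ l * (a ^ 2 / b) + b / l := by
  have hsq : l * (a ^ 2 / b) + b / l - 2 * |a| = (l * |a| - b) ^ 2 / (l * b) := by
    field_simp
    linear_combination (-l ^ 2) * sq_abs a
  have hsq_nonneg : 0 ≤ (l * |a| - b) ^ 2 / (l * b) := by positivity
  linarith

lemma sq_le_mul_of_forall_two_mul_le {T a b : ℝ} (hT : 0 ≤ T) (ha : 0 ≤ a) (hb : 0 < b)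
    (h : ∀ l > 0, 2 * T ≤ l * a + b / l) : T ^ 2 ≤ a * b := by
  rcases hT.eq_or_lt with rfl | hT
  · simpa using mul_nonneg ha hb.le
  -- the choice `l = b / T` makes the two terms of the bound balance
  have hl := h (b / T) (by positivity)
  rw [div_div_eq_mul_div, mul_div_cancel_left₀ T hb.ne'] at hl
  have : b / T * a * T = a * b := by field_simp
  nlinarith

section

variable {α : Type*} [MeasurableSpace α]

lemma integrable_comp_of_ae_mem_Icc {M : Measure α} [IsFiniteMeasure M] {ρ : α → ℝ}
    (hρ : Measurable ρ) {a b : ℝ} (hab : ∀ᵐ x ∂M, ρ x ∈ Icc a b) {φ : ℝ → ℝ}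
    (hφm : Measurable φ) (hφ : ContinuousOn φ (Icc a b)) :
    Integrable (fun x => φ (ρ x)) M := by
  obtain ⟨K, hK⟩ := isCompact_Icc.exists_bound_of_continuousOn hφ
  exact Integrable.of_bound (hφm.comp hρ).aestronglyMeasurable K
    (hab.mono fun x hx => hK _ hx)

variable {ν M : Measure α}

lemma integral_sub_integral_eq_integral_rnDeriv_sub_one_mul [SigmaFinite ν] [SigmaFinite M]
    (hac : ν ≪ M) {h : α → ℝ} (hν : Integrable h ν) (hM : Integrable h M) :
    ∫ x, h x ∂ν - ∫ x, h x ∂M = ∫ x, ((ν.rnDeriv M x).toReal - 1) * h x ∂M := by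
  have hρh : Integrable (fun x => (ν.rnDeriv M x).toReal * h x) M :=
    (integrable_toReal_rnDeriv_mul_iff hac).2 hν
  simp only [sub_mul, one_mul]
  rw [integral_sub hρh hM, integral_toReal_rnDeriv_mul hac]

lemma abs_integral_sub_integral_le [IsFiniteMeasure ν] [IsFiniteMeasure M] (hac : ν ≪ M)
    {h : α → ℝ} (hh : Measurable h) {r : ℝ} (hr : ∀ x, |h x| ≤ r) :
    |∫ x, h x ∂ν - ∫ x, h x ∂M| ≤ r * ∫ x, |(ν.rnDeriv M x).toReal - 1| ∂M := by
  have hint (μ : Measure α) [IsFiniteMeasure μ] : Integrable h μ :=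
    Integrable.of_bound hh.aestronglyMeasurable r (.of_forall hr)
  rw [integral_sub_integral_eq_integral_rnDeriv_sub_one_mul hac (hint ν) (hint M),
    ← integral_const_mul]
  refine abs_integral_le_integral_abs.trans
    (integral_mono_of_nonneg (.of_forall fun x => by positivity)
      ((Measure.integrable_toReal_rnDeriv.sub (integrable_const 1)).abs.const_mul r)
      (.of_forall fun x => ?_))
  dsimp only
  rw [abs_mul, mul_comm r]
  exact mul_le_mul_of_nonneg_left (hr x) (abs_nonneg _)

lemma abs_integral_sub_integral_le_half_mul [IsProbabilityMeasure ν] [IsProbabilityMeasure M]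
    (hac : ν ≪ M) {g : α → ℝ} (hg : Measurable g) {C : ℝ} (hg0 : ∀ x, 0 ≤ g x)
    (hgC : ∀ x, g x ≤ C) :
    |∫ x, g x ∂ν - ∫ x, g x ∂M| ≤ C / 2 * ∫ x, |(ν.rnDeriv M x).toReal - 1| ∂M := by
  have hcentre (μ : Measure α) [IsProbabilityMeasure μ] :
      ∫ x, (g x - C / 2) ∂μ = ∫ x, g x ∂μ - C / 2 := by
    have hgμ : Integrable g μ := Integrable.of_bound hg.aestronglyMeasurable C
      (.of_forall fun x => by rw [Real.norm_eq_abs, abs_of_nonneg (hg0 x)]; exact hgC x)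
    rw [integral_sub hgμ (integrable_const _), integral_const, probReal_univ, one_smul]
  have h := abs_integral_sub_integral_le hac (h := fun x => g x - C / 2)
    (hg.sub measurable_const) (r := C / 2)
    fun x => abs_le.2 ⟨by linarith [hg0 x], by linarith [hgC x]⟩
  rwa [hcentre ν, hcentre M, sub_sub_sub_cancel_right] at h

lemma klDiv_eq_integral_klFun [IsProbabilityMeasure ν] [IsProbabilityMeasure M] (hac : ν ≪ M)
    (hint : Integrable (fun x => klFun (ν.rnDeriv M x).toReal) M) :
    klDiv ν M = ∫ x, klFun (ν.rnDeriv M x).toReal ∂M := by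
  rw [InformationTheory.integral_klFun_rnDeriv hac
    ((InformationTheory.integrable_klFun_rnDeriv_iff hac).1 hint)]
  simp [klDiv, llr]

lemma sq_integral_abs_rnDeriv_sub_one_le_two_mul_klDiv [IsProbabilityMeasure ν]
    [IsProbabilityMeasure M] (hac : ν ≪ M) {B : ℝ}
    (hB : ∀ᵐ x ∂M, (ν.rnDeriv M x).toReal ≤ B) :
    (∫ x, |(ν.rnDeriv M x).toReal - 1| ∂M) ^ 2 ≤ 2 * klDiv ν M := by
  set ρ := fun x => (ν.rnDeriv M x).toReal
  have hρm : Measurable ρ := (Measure.measurable_rnDeriv ν M).ennreal_toReal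
  have hρB : ∀ᵐ x ∂M, ρ x ∈ Icc 0 B := hB.mono fun x hx => ⟨ENNReal.toReal_nonneg, hx⟩
  have hρ1 : ∫ x, ρ x ∂M = 1 := by rw [Measure.integral_toReal_rnDeriv hac, probReal_univ]
  have hSint : Integrable (fun x => (ρ x - 1) ^ 2 / (ρ x + 2)) M :=
    integrable_comp_of_ae_mem_Icc (φ := fun t => (t - 1) ^ 2 / (t + 2)) hρm hρB
      (by fun_prop)
      (ContinuousOn.div (by fun_prop) (by fun_prop) fun t ht => by linarith [ht.1])
  set S := ∫ x, (ρ x - 1) ^ 2 / (ρ x + 2) ∂M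
  have hklint : Integrable (fun x => klFun (ρ x)) M :=
    integrable_comp_of_ae_mem_Icc hρm hρB InformationTheory.measurable_klFun
      InformationTheory.continuous_klFun.continuousOn
  have hS : 3 * S ≤ 2 * klDiv ν M := by
    rw [klDiv_eq_integral_klFun hac hklint, ← integral_const_mul, ← integral_const_mul]
    refine integral_mono (hSint.const_mul 3) (hklint.const_mul 2) fun x => ?_
    exact three_mul_sq_div_le_two_mul_klFun ENNReal.toReal_nonneg
  have hT : ∀ l > 0, 2 * ∫ x, |ρ x - 1| ∂M ≤ l * S + 3 / l := by
    intro l hl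
    have hρ2 : Integrable (fun x => (ρ x + 2) / l) M :=
      (Measure.integrable_toReal_rnDeriv.add (integrable_const 2)).div_const l
    calc 2 * ∫ x, |ρ x - 1| ∂M = ∫ x, 2 * |ρ x - 1| ∂M := (integral_const_mul _ _).symm
      _ ≤ ∫ x, (l * ((ρ x - 1) ^ 2 / (ρ x + 2)) + (ρ x + 2) / l) ∂M :=
          integral_mono
            ((Measure.integrable_toReal_rnDeriv.sub (integrable_const 1)).abs.const_mul 2)
            ((hSint.const_mul l).add hρ2) fun x =>
            two_mul_abs_le_mul_sq_div_add_div (by positivity) hl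
      _ = l * S + 3 / l := by
          rw [integral_add (hSint.const_mul l) hρ2, integral_const_mul, integral_div,
            integral_add Measure.integrable_toReal_rnDeriv (integrable_const 2), hρ1,
            integral_const, probReal_univ]
          norm_num [S]
  calc (∫ x, |ρ x - 1| ∂M) ^ 2 ≤ S * 3 :=
        sq_le_mul_of_forall_two_mul_le (integral_nonneg fun x => abs_nonneg _)
          (integral_nonneg fun x => by positivity) three_pos hT
    _ ≤ 2 * klDiv ν M := by linarith

instance isProbabilityMeasure_midM (P Q : Measure α) [IsProbabilityMeasure P]
    [IsProbabilityMeasure Q] : IsProbabilityMeasure (midM P Q) := by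
  constructor
  simp only [midM, Measure.smul_apply, Measure.add_apply, measure_univ, smul_eq_mul,
    one_add_one_eq_two]
  exact ENNReal.inv_mul_cancel two_ne_zero ENNReal.ofNat_ne_top

lemma absolutelyContinuous_midM_of_le {P Q : Measure α} (h : ν ≤ P + Q) : ν ≪ midM P Q :=
  h.absolutelyContinuous.trans (Measure.absolutelyContinuous_smul (by norm_num))

lemma toReal_rnDeriv_midM_le_two {P Q : Measure α} [IsFiniteMeasure ν] [IsFiniteMeasure P]
    [IsFiniteMeasure Q] (h : ν ≤ P + Q) :
    ∀ᵐ x ∂midM P Q, (ν.rnDeriv (midM P Q) x).toReal ≤ 2 := by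
  have hsmul := Measure.rnDeriv_smul_right_of_ne_top ν (P + Q) (r := 2⁻¹) (by norm_num)
    (by norm_num)
  have hle := Measure.rnDeriv_le_one_of_le h
  refine Measure.smul_absolutelyContinuous.ae_le (hsmul.and hle |>.mono fun x ⟨hx, hx1⟩ => ?_)
  rw [midM, hx, Pi.smul_apply, smul_eq_mul, inv_inv]
  calc (2 * ν.rnDeriv (P + Q) x).toReal ≤ (2 * 1 : ℝ≥0∞).toReal :=
        ENNReal.toReal_mono (by norm_num) (mul_le_mul_right hx1 2)
    _ = 2 := by norm_num

theorem integral_le_integral_add_sqrt_two_mul_jsDist (P Q : Measure α) [IsProbabilityMeasure P]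
    [IsProbabilityMeasure Q] {g : α → ℝ} (hg : Measurable g) {C : ℝ} (hg0 : ∀ x, 0 ≤ g x)
    (hgC : ∀ x, g x ≤ C) :
    ∫ x, g x ∂P ≤ ∫ x, g x ∂Q + √2 * C * jsDist P Q := by
  obtain ⟨x₀⟩ := nonempty_of_isProbabilityMeasure P
  have hC : 0 ≤ C := (hg0 x₀).trans (hgC x₀)
  have hP : P ≤ P + Q := Measure.le_add_right le_rfl
  have hQ : Q ≤ P + Q := Measure.le_add_left le_rfl
  set T₁ := ∫ x, |(P.rnDeriv (midM P Q) x).toReal - 1| ∂midM P Q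
  set T₂ := ∫ x, |(Q.rnDeriv (midM P Q) x).toReal - 1| ∂midM P Q
  have hgP := abs_le.1 (abs_integral_sub_integral_le_half_mul
    (absolutelyContinuous_midM_of_le hP) hg hg0 hgC)
  have hgQ := abs_le.1 (abs_integral_sub_integral_le_half_mul
    (absolutelyContinuous_midM_of_le hQ) hg hg0 hgC)
  have hT₁ : T₁ ^ 2 ≤ 2 * klDiv P (midM P Q) :=
    sq_integral_abs_rnDeriv_sub_one_le_two_mul_klDiv (absolutelyContinuous_midM_of_le hP)
      (toReal_rnDeriv_midM_le_two hP)
  have hT₂ : T₂ ^ 2 ≤ 2 * klDiv Q (midM P Q) :=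
    sq_integral_abs_rnDeriv_sub_one_le_two_mul_klDiv (absolutelyContinuous_midM_of_le hQ)
      (toReal_rnDeriv_midM_le_two hQ)
  have hjs : √2 * jsDist P Q = √(klDiv P (midM P Q) + klDiv Q (midM P Q)) := by
    rw [jsDist, jsDiv, ← Real.sqrt_mul zero_le_two]
    congr 1
    ring
  have hT : T₁ + T₂ ≤ 2 * √(klDiv P (midM P Q) + klDiv Q (midM P Q)) := by
    have hT₁₀ : 0 ≤ T₁ := integral_nonneg fun x => abs_nonneg _
    have hT₂₀ : 0 ≤ T₂ := integral_nonneg fun x => abs_nonneg _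
    calc T₁ + T₂ ≤ √(2 ^ 2 * (klDiv P (midM P Q) + klDiv Q (midM P Q))) :=
          Real.le_sqrt_of_sq_le (by nlinarith [sq_nonneg (T₁ - T₂)])
      _ = 2 * √(klDiv P (midM P Q) + klDiv Q (midM P Q)) := by
          rw [Real.sqrt_mul (by positivity), Real.sqrt_sq zero_le_two]
  calc ∫ x, g x ∂P ≤ ∫ x, g x ∂Q + C / 2 * (T₁ + T₂) := by linarith
    _ ≤ ∫ x, g x ∂Q + C / 2 * (2 * √(klDiv P (midM P Q) + klDiv Q (midM P Q))) := by gcongr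
    _ = ∫ x, g x ∂Q + √2 * C * jsDist P Q := by rw [← hjs]; ring

end

lemma le_inv_card_mul_sum_add_of_forall_le {ι : Type*} [Fintype ι] [Nonempty ι] {a d : ℝ}
    {x : ι → ℝ} (h : ∀ j, a ≤ x j + d) :
    a ≤ (1 / Fintype.card ι) * ∑ j, x j + d := by
  have hsum := Finset.card_nsmul_le_sum Finset.univ (fun j => x j + d) a fun j _ => h j
  rw [Finset.sum_add_distrib, Finset.sum_const, Finset.card_univ, nsmul_eq_mul, nsmul_eq_mul]
    at hsum
  have hcard : (0 : ℝ) < Fintype.card ι := Nat.cast_pos.2 Fintype.card_pos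
  rw [one_div, ← div_eq_inv_mul, ← sub_le_iff_le_add, le_div_iff₀ hcard]
  linarith

/-- target-domain accuracy upper bound over N source domains:
ε_{D^T}(f) ≤ (1/N)∑ᵢ ε_{Dᵢ}(f) + √2·C·minᵢ d_JS(P^T, Pᵢ) + √2·C·maxᵢⱼ d_JS(Pᵢ, Pⱼ). -/
theorem stmt10 {𝒳 𝒴 Pred : Type*} [MeasurableSpace 𝒳] [MeasurableSpace 𝒴]
    [MeasurableSpace Pred] {N : ℕ} (hN : 0 < N)
    (μS : Fin N → Measure (𝒳 × 𝒴)) (hμS : ∀ i, IsProbabilityMeasure (μS i))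
    (μT : Measure (𝒳 × 𝒴)) [IsProbabilityMeasure μT]
    (L : Pred → 𝒴 → ℝ) (C : ℝ) (hC : 0 < C)
    (hL : Measurable (Function.uncurry L))
    (hL0 : ∀ p y, 0 ≤ L p y) (hLC : ∀ p y, L p y ≤ C)
    (f : 𝒳 → Pred) (hf : Measurable f) :
    ∫ p, L (f p.1) p.2 ∂μT
      ≤ (1 / (N : ℝ)) * ∑ i, ∫ p, L (f p.1) p.2 ∂(μS i)
        + Real.sqrt 2 * C * (⨅ i, jsDist μT (μS i))
        + Real.sqrt 2 * C * (⨆ i, ⨆ j, jsDist (μS i) (μS j)) := by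
  have : Nonempty (Fin N) := ⟨⟨0, hN⟩⟩
  have hg : Measurable fun p : 𝒳 × 𝒴 => L (f p.1) p.2 :=
    hL.comp ((hf.comp measurable_fst).prodMk measurable_snd)
  have transfer (P Q : Measure (𝒳 × 𝒴)) [IsProbabilityMeasure P] [IsProbabilityMeasure Q] :=
    integral_le_integral_add_sqrt_two_mul_jsDist P Q hg (fun p => hL0 _ p.2) (fun p => hLC _ p.2)
  obtain ⟨i₀, hi₀⟩ := exists_eq_ciInf_of_finite (f := fun i => jsDist μT (μS i))
  have hsource (j : Fin N) : ∫ p, L (f p.1) p.2 ∂(μS i₀)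
      ≤ ∫ p, L (f p.1) p.2 ∂(μS j) + √2 * C * ⨆ i, ⨆ j, jsDist (μS i) (μS j) := by
    refine (transfer (μS i₀) (μS j)).trans ?_
    gcongr
    exact le_ciSup_of_le (Finite.bddAbove_range _) i₀
      (le_ciSup (Finite.bddAbove_range fun j => jsDist (μS i₀) (μS j)) j)
  calc ∫ p, L (f p.1) p.2 ∂μT
      ≤ ∫ p, L (f p.1) p.2 ∂(μS i₀) + √2 * C * ⨅ i, jsDist μT (μS i) :=
        hi₀ ▸ transfer μT (μS i₀)
    _ ≤ _ := by
      have := le_inv_card_mul_sum_add_of_forall_le hsource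
      rw [Fintype.card_fin] at this
      linarith
end

section
/- Suppose L(f(x),y) = ∑_{ŷ} f(x)_ŷ · ℓ(ŷ,y) with ℓ(ŷ,y) ≥ c > 0 for ŷ ≠ y and ℓ(y,y)=0. Then for any domain D, E_D[L(f(X),Y)] ≥ (2c/|𝒴|)·d_JS(P_D^Y, P_D^{Ŷ})⁴, where Ŷ is the label sampled from the predictor f. -/
open MeasureTheory ProbabilityTheory Real
open scoped ENNReal

noncomputable def klPMF {K : ℕ} (p q : Fin K → ℝ) : ℝ :=
  ∑ y, p y * Real.log (p y / q y)

noncomputable def jsPMF {K : ℕ} (p q : Fin K → ℝ) : ℝ :=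
  2⁻¹ * klPMF p (fun y => (p y + q y) / 2) + 2⁻¹ * klPMF q (fun y => (p y + q y) / 2)

noncomputable def jsDistPMF {K : ℕ} (p q : Fin K → ℝ) : ℝ :=
  Real.sqrt (jsPMF p q)

/-!
For probability vectors `u = f_D(x)` and `v = f(x)` the expected loss is at least
`c (1 - ⟨u, v⟩) ≥ (c/2) ‖u - v‖₂² ≥ (c/(2K)) ‖u - v‖₁²`. Integrating over `x` and using Jensen
(`(∫ g)² ≤ ∫ g²`) together with `‖∫ (f_D - f)‖₁ ≤ ∫ ‖f_D - f‖₁` bounds `(c/(2K)) ‖P^Y - P^Ŷ‖₁²` by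
the expected loss. On the other side `d_JS⁴ = D_JS² ≤ (‖P^Y - P^Ŷ‖₁ / 2)²`, since `log t ≤ t - 1`
bounds the two KL terms against the midpoint by `(a - b)² / (a + b) ≤ |a - b|`.
-/

section ProbabilityVectors

variable {ι : Type*} [Fintype ι] {u v : ι → ℝ}

lemma sum_abs_sub_le_two (hu : u ∈ stdSimplex ℝ ι) (hv : v ∈ stdSimplex ℝ ι) :
    ∑ i, |u i - v i| ≤ 2 := by
  calc ∑ i, |u i - v i| ≤ ∑ i, (u i + v i) :=
        Finset.sum_le_sum fun i _ => (abs_sub _ _).trans_eq <| by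
          rw [abs_of_nonneg (hu.1 i), abs_of_nonneg (hv.1 i)]
    _ = 2 := by rw [Finset.sum_add_distrib, hu.2, hv.2]; norm_num

lemma sum_sq_sub_le_two_mul_one_sub_dotProduct (hu : u ∈ stdSimplex ℝ ι)
    (hv : v ∈ stdSimplex ℝ ι) : ∑ i, (u i - v i) ^ 2 ≤ 2 * (1 - u ⬝ᵥ v) := by
  have hterm : ∀ i, (u i - v i) ^ 2 ≤ u i + v i - 2 * (u i * v i) := fun i => by
    obtain ⟨hu0, hu1⟩ := mem_Icc_of_mem_stdSimplex hu i
    obtain ⟨hv0, hv1⟩ := mem_Icc_of_mem_stdSimplex hv i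
    nlinarith
  calc ∑ i, (u i - v i) ^ 2 ≤ ∑ i, (u i + v i - 2 * (u i * v i)) :=
        Finset.sum_le_sum fun i _ => hterm i
    _ = 2 * (1 - u ⬝ᵥ v) := by
      rw [Finset.sum_sub_distrib, Finset.sum_add_distrib, hu.2, hv.2, ← Finset.mul_sum,
        dotProduct]
      ring

lemma sq_sum_abs_sub_le_card_mul_one_sub_dotProduct (hu : u ∈ stdSimplex ℝ ι)
    (hv : v ∈ stdSimplex ℝ ι) :
    (∑ i, |u i - v i|) ^ 2 ≤ 2 * Fintype.card ι * (1 - u ⬝ᵥ v) := by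
  calc (∑ i, |u i - v i|) ^ 2 ≤ Fintype.card ι * ∑ i, |u i - v i| ^ 2 :=
        sq_sum_le_card_mul_sum_sq
    _ = Fintype.card ι * ∑ i, (u i - v i) ^ 2 := by simp_rw [sq_abs]
    _ ≤ Fintype.card ι * (2 * (1 - u ⬝ᵥ v)) := by
        gcongr; exact sum_sq_sub_le_two_mul_one_sub_dotProduct hu hv
    _ = 2 * Fintype.card ι * (1 - u ⬝ᵥ v) := by ring

variable {ℓ : ι → ι → ℝ} {c : ℝ}

lemma mul_one_sub_le_sum_mul_loss (hv : v ∈ stdSimplex ℝ ι) (hℓ : ∀ i j, i ≠ j → c ≤ ℓ i j)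
    (hℓdiag : ∀ j, ℓ j j = 0) (j : ι) : c * (1 - v j) ≤ ∑ i, v i * ℓ i j := by
  classical
  have hterm : ∀ i, c * v i - (if i = j then c * v i else 0) ≤ v i * ℓ i j := fun i => by
    split_ifs with h
    · subst h; simp [hℓdiag]
    · simpa [mul_comm] using mul_le_mul_of_nonneg_left (hℓ i j h) (hv.1 i)
  calc c * (1 - v j) = ∑ i, (c * v i - (if i = j then c * v i else 0)) := by
        rw [Finset.sum_sub_distrib, ← Finset.mul_sum, hv.2, Finset.sum_ite_eq']
        simp [mul_sub]
    _ ≤ ∑ i, v i * ℓ i j := Finset.sum_le_sum fun i _ => hterm i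

lemma mul_one_sub_dotProduct_le_expected_loss (hu : u ∈ stdSimplex ℝ ι)
    (hv : v ∈ stdSimplex ℝ ι) (hℓ : ∀ i j, i ≠ j → c ≤ ℓ i j) (hℓdiag : ∀ j, ℓ j j = 0) :
    c * (1 - u ⬝ᵥ v) ≤ ∑ j, u j * ∑ i, v i * ℓ i j := by
  calc c * (1 - u ⬝ᵥ v) = ∑ j, u j * (c * (1 - v j)) := by
        nth_rw 1 [← hu.2]
        rw [dotProduct, ← Finset.sum_sub_distrib, Finset.mul_sum]
        exact Finset.sum_congr rfl fun j _ => by ring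
    _ ≤ ∑ j, u j * ∑ i, v i * ℓ i j := Finset.sum_le_sum fun j _ =>
        mul_le_mul_of_nonneg_left (mul_one_sub_le_sum_mul_loss hv hℓ hℓdiag j) (hu.1 j)

lemma mul_sq_sum_abs_sub_le_expected_loss (hu : u ∈ stdSimplex ℝ ι)
    (hv : v ∈ stdSimplex ℝ ι) (hc : 0 ≤ c) (hℓ : ∀ i j, i ≠ j → c ≤ ℓ i j)
    (hℓdiag : ∀ j, ℓ j j = 0) :
    c * (∑ i, |u i - v i|) ^ 2 ≤ 2 * Fintype.card ι * ∑ j, u j * ∑ i, v i * ℓ i j := by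
  calc c * (∑ i, |u i - v i|) ^ 2 ≤ c * (2 * Fintype.card ι * (1 - u ⬝ᵥ v)) :=
        mul_le_mul_of_nonneg_left (sq_sum_abs_sub_le_card_mul_one_sub_dotProduct hu hv) hc
    _ = 2 * Fintype.card ι * (c * (1 - u ⬝ᵥ v)) := by ring
    _ ≤ 2 * Fintype.card ι * ∑ j, u j * ∑ i, v i * ℓ i j := by
        gcongr; exact mul_one_sub_dotProduct_le_expected_loss hu hv hℓ hℓdiag

end ProbabilityVectors

section Integrals

variable {α ι : Type*} [MeasurableSpace α] {μ : Measure α} [Fintype ι]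

lemma sum_abs_sub_integral_le_integral_sum_abs_sub {F G : α → ι → ℝ}
    (hF : ∀ i, Integrable (fun x => F x i) μ) (hG : ∀ i, Integrable (fun x => G x i) μ) :
    ∑ i, |∫ x, F x i ∂μ - ∫ x, G x i ∂μ| ≤ ∫ x, ∑ i, |F x i - G x i| ∂μ := by
  rw [integral_finsetSum (f := fun i x => |F x i - G x i|) _
    fun i _ => ((hF i).sub (hG i)).abs]
  refine Finset.sum_le_sum fun i _ => ?_
  rw [← integral_sub (hF i) (hG i)]
  exact abs_integral_le_integral_abs

lemma sq_integral_le_integral_sq [IsProbabilityMeasure μ] {g : α → ℝ} (hg : MemLp g 2 μ) :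
    (∫ x, g x ∂μ) ^ 2 ≤ ∫ x, g x ^ 2 ∂μ := by
  have hvar := variance_nonneg g μ
  rw [variance_eq_sub hg] at hvar
  simp only [Pi.pow_apply] at hvar
  linarith

lemma mul_sq_sum_abs_sub_integral_le_integral_expected_loss [IsProbabilityMeasure μ]
    {F G : α → ι → ℝ} (hF : ∀ x, F x ∈ stdSimplex ℝ ι) (hG : ∀ x, G x ∈ stdSimplex ℝ ι)
    (hFi : ∀ i, Integrable (fun x => F x i) μ) (hGi : ∀ i, Integrable (fun x => G x i) μ)
    {ℓ : ι → ι → ℝ} {c : ℝ} (hc : 0 ≤ c) (hℓ : ∀ i j, i ≠ j → c ≤ ℓ i j)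
    (hℓdiag : ∀ j, ℓ j j = 0)
    (hint : Integrable (fun x => ∑ j, F x j * ∑ i, G x i * ℓ i j) μ) :
    c * (∑ i, |∫ x, F x i ∂μ - ∫ x, G x i ∂μ|) ^ 2
      ≤ 2 * Fintype.card ι * ∫ x, ∑ j, F x j * ∑ i, G x i * ℓ i j ∂μ := by
  set g : α → ℝ := fun x => ∑ i, |F x i - G x i|
  have hg_int : Integrable g μ := integrable_finsetSum _ fun i _ => ((hFi i).sub (hGi i)).abs
  have hg : MemLp g 2 μ := by
    refine MemLp.of_bound hg_int.aestronglyMeasurable 2 (ae_of_all _ fun x => ?_)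
    rw [norm_of_nonneg (Finset.sum_nonneg fun i _ => abs_nonneg _)]
    exact sum_abs_sub_le_two (hF x) (hG x)
  calc c * (∑ i, |∫ x, F x i ∂μ - ∫ x, G x i ∂μ|) ^ 2 ≤ c * (∫ x, g x ∂μ) ^ 2 := by
        gcongr
        exact sum_abs_sub_integral_le_integral_sum_abs_sub hFi hGi
    _ ≤ c * ∫ x, g x ^ 2 ∂μ := by gcongr; exact sq_integral_le_integral_sq hg
    _ = ∫ x, c * g x ^ 2 ∂μ := (integral_const_mul _ _).symm
    _ ≤ ∫ x, 2 * Fintype.card ι * ∑ j, F x j * ∑ i, G x i * ℓ i j ∂μ :=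
        integral_mono (hg.integrable_sq.const_mul _) (hint.const_mul _) fun x =>
          mul_sq_sum_abs_sub_le_expected_loss (hF x) (hG x) hc hℓ hℓdiag
    _ = 2 * Fintype.card ι * ∫ x, ∑ j, F x j * ∑ i, G x i * ℓ i j ∂μ := integral_const_mul _ _

end Integrals

lemma mul_log_div_midpoint_add_mul_log_div_midpoint_le_abs_sub {a b : ℝ} (ha : 0 ≤ a)
    (hb : 0 ≤ b) :
    a * log (a / ((a + b) / 2)) + b * log (b / ((a + b) / 2)) ≤ |a - b| := by
  rcases (add_nonneg ha hb).eq_or_lt with hab | hab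
  · obtain rfl : a = 0 := by linarith
    obtain rfl : b = 0 := by linarith
    simp
  set m := (a + b) / 2 with hm
  have hm_pos : 0 < m := by positivity
  have hlog : ∀ t, 0 ≤ t → t * log (t / m) ≤ t * (t / m - 1) := fun t ht => by
    rcases ht.eq_or_lt with rfl | ht
    · simp
    · exact mul_le_mul_of_nonneg_left (log_le_sub_one_of_pos (div_pos ht hm_pos)) ht.le
  have hchi : a * (a / m - 1) + b * (b / m - 1) = (a - b) ^ 2 / (a + b) := by
    rw [hm]; field_simp; ring
  have hchi_le : (a - b) ^ 2 / (a + b) ≤ |a - b| := by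
    rw [div_le_iff₀ hab, ← sq_abs, sq]
    exact mul_le_mul_of_nonneg_left (abs_sub_le_iff.mpr ⟨by linarith, by linarith⟩)
      (abs_nonneg _)
  linarith [hlog a ha, hlog b hb]

lemma jsPMF_le_half_sum_abs_sub {K : ℕ} {p q : Fin K → ℝ} (hp : ∀ y, 0 ≤ p y)
    (hq : ∀ y, 0 ≤ q y) : jsPMF p q ≤ 2⁻¹ * ∑ y, |p y - q y| := by
  have hsum := Finset.sum_le_sum fun y (_ : y ∈ Finset.univ) =>
    mul_log_div_midpoint_add_mul_log_div_midpoint_le_abs_sub (hp y) (hq y)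
  rw [Finset.sum_add_distrib] at hsum
  rw [jsPMF, klPMF, klPMF]
  linarith

lemma jsDistPMF_pow_four_le {K : ℕ} {p q : Fin K → ℝ} (hp : ∀ y, 0 ≤ p y)
    (hq : ∀ y, 0 ≤ q y) : jsDistPMF p q ^ 4 ≤ (2⁻¹ * ∑ y, |p y - q y|) ^ 2 := by
  rw [jsDistPMF, show 4 = 2 * 2 by rfl, pow_mul, sq_sqrt']
  exact pow_le_pow_left₀ (le_max_right _ _)
    (max_le (jsPMF_le_half_sum_abs_sub hp hq) (by positivity)) 2

theorem stmt16_general {𝒳 : Type*} [MeasurableSpace 𝒳]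
    (μ : Measure 𝒳) [IsProbabilityMeasure μ]
    {K : ℕ}
    (f fD : 𝒳 → Fin K → ℝ)
    (hf : ∀ x, (∀ yh, 0 ≤ f x yh) ∧ ∑ yh, f x yh = 1)
    (hfD : ∀ x, (∀ y, 0 ≤ fD x y) ∧ ∑ y, fD x y = 1)
    (hfm : ∀ yh, Integrable (fun x => f x yh) μ)
    (hfDm : ∀ y, Integrable (fun x => fD x y) μ)
    (ℓ : Fin K → Fin K → ℝ) (c : ℝ) (hc : 0 < c)
    (hℓ : ∀ yh y, yh ≠ y → c ≤ ℓ yh y) (hℓdiag : ∀ y, ℓ y y = 0)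
    (hint : Integrable (fun x => ∑ y, fD x y * ∑ yh, f x yh * ℓ yh y) μ) :
    (2 * c / (K : ℝ)) *
        (jsDistPMF (fun y => ∫ x, fD x y ∂μ) (fun yh => ∫ x, f x yh ∂μ)) ^ 4
      ≤ ∫ x, ∑ y, fD x y * ∑ yh, f x yh * ℓ yh y ∂μ := by
  have hK : (0 : ℝ) < K := by
    obtain ⟨x⟩ := nonempty_of_isProbabilityMeasure μ
    rcases Nat.eq_zero_or_pos K with rfl | hK
    · simpa using (hf x).2
    · exact_mod_cast hK
  have hloss := mul_sq_sum_abs_sub_integral_le_integral_expected_loss hfD hf hfDm hfm hc.le hℓ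
    hℓdiag hint
  rw [Fintype.card_fin] at hloss
  have hJS := jsDistPMF_pow_four_le (fun y => integral_nonneg (μ := μ) fun x => (hfD x).1 y)
    (fun y => integral_nonneg (μ := μ) fun x => (hf x).1 y)
  calc 2 * c / K * jsDistPMF (fun y => ∫ x, fD x y ∂μ) (fun yh => ∫ x, f x yh ∂μ) ^ 4
      ≤ 2 * c / K * (2⁻¹ * ∑ y, |∫ x, fD x y ∂μ - ∫ x, f x y ∂μ|) ^ 2 := by gcongr
    _ = c * (∑ y, |∫ x, fD x y ∂μ - ∫ x, f x y ∂μ|) ^ 2 / (2 * K) := by field_simp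
    _ ≤ ∫ x, ∑ y, fD x y * ∑ yh, f x yh * ℓ yh y ∂μ := by
        rw [div_le_iff₀ (by positivity)]
        linarith

/-- per-domain loss lower bound. For L(f(x),y) = ∑_ŷ f(x)_ŷ ℓ(ŷ,y)
with ℓ ≥ c off the diagonal and 0 on it, E_D[L(f(X),Y)] ≥ (2c/|𝒴|)·d_JS(P_D^Y, P_D^Ŷ)⁴,
where fD is the (stochastic) labeling function of domain D, P_D^Y(y) = E_X[fD(X)_y]
and P_D^Ŷ(ŷ) = E_X[f(X)_ŷ]. -/
theorem stmt16 {𝒳 : Type*} [MeasurableSpace 𝒳]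
    (μ : Measure 𝒳) [IsProbabilityMeasure μ]
    {K : ℕ} (hK : 0 < K)
    (f fD : 𝒳 → Fin K → ℝ)
    (hf : ∀ x, (∀ yh, 0 ≤ f x yh) ∧ ∑ yh, f x yh = 1)
    (hfD : ∀ x, (∀ y, 0 ≤ fD x y) ∧ ∑ y, fD x y = 1)
    (hfm : ∀ yh, Integrable (fun x => f x yh) μ)
    (hfDm : ∀ y, Integrable (fun x => fD x y) μ)
    (ℓ : Fin K → Fin K → ℝ) (c : ℝ) (hc : 0 < c)
    (hℓ : ∀ yh y, yh ≠ y → c ≤ ℓ yh y) (hℓdiag : ∀ y, ℓ y y = 0)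
    (hint : Integrable (fun x => ∑ y, fD x y * ∑ yh, f x yh * ℓ yh y) μ) :
    (2 * c / (K : ℝ)) *
        (jsDistPMF (fun y => ∫ x, fD x y ∂μ) (fun yh => ∫ x, f x yh ∂μ)) ^ 4
      ≤ ∫ x, ∑ y, fD x y * ∑ yh, f x yh * ℓ yh y ∂μ :=
  stmt16_general μ f fD hf hfD hfm hfDm ℓ c hc hℓ hℓdiag hint
end
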